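/- arXiv:2207.11337 — 4 statements merged into one kernel-verified Lean document; each statement's English description precedes it below -/
import Mathlib

section
/- Let S be a finite set partitioned into groups S_1, ..., S_m with range bounds l_i ≤ u_i. Suppose B ⊆ S satisfies |B| ≤ k, |B ∩ S_i| ≤ u_i for all i, and ∑_{i=1}^m max(0, l_i − |B ∩ S_i|) ≤ k − |B|. If additionally k ≤ ∑_i u_i and l_i ≤ u_i ≤ |S_i| for all i, then B can be extended to a set C with B ⊆ C ⊆ S, |C| = k, and l_i ≤ |C ∩ S_i| ≤ u_i for all i. -/
/-- a set satisfying the fair-shift requirements extends to a fair set of k centers. -/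
theorem fair_shift_extension {α : Type*} [DecidableEq α] (S : Finset α) (m k : ℕ)
    (Sg : Fin m → Finset α)
    (hdisj : ∀ i j : Fin m, i ≠ j → Disjoint (Sg i) (Sg j))
    (hcover : S = Finset.univ.biUnion Sg)
    (l u : Fin m → ℕ)
    (hlu : ∀ i, l i ≤ u i) (hus : ∀ i, u i ≤ (Sg i).card)
    (hku : k ≤ ∑ i, u i)
    (B : Finset α) (hBS : B ⊆ S) (hBk : B.card ≤ k)
    (hBu : ∀ i, (B ∩ Sg i).card ≤ u i)
    (hdef : ∑ i, (l i - (B ∩ Sg i).card) ≤ k - B.card) :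
    ∃ C : Finset α, B ⊆ C ∧ C ⊆ S ∧ C.card = k ∧
      ∀ i, l i ≤ (C ∩ Sg i).card ∧ (C ∩ Sg i).card ≤ u i := by
  -- sum of intersection cards equals card, for subsets of S
  have hsum : ∀ B' : Finset α, B' ⊆ S → ∑ i, (B' ∩ Sg i).card = B'.card := by
    intro B' hB'
    have hB'eq : B' = Finset.univ.biUnion (fun i => B' ∩ Sg i) := by
      ext x
      simp only [Finset.mem_biUnion, Finset.mem_univ, Finset.mem_inter, true_and]
      constructor
      · intro hx
        have := hB' hx
        rw [hcover] at this
        simp only [Finset.mem_biUnion, Finset.mem_univ, true_and] at this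
        obtain ⟨i, hi⟩ := this
        exact ⟨i, hx, hi⟩
      · rintro ⟨i, hx, -⟩; exact hx
    conv_rhs => rw [hB'eq]
    rw [Finset.card_biUnion (fun i _ j _ hij =>
      Finset.disjoint_of_subset_left Finset.inter_subset_right
        (Finset.disjoint_of_subset_right Finset.inter_subset_right (hdisj i j hij)))]
  suffices H : ∀ n : ℕ, ∀ B : Finset α, B ⊆ S → B.card ≤ k →
      (∀ i, (B ∩ Sg i).card ≤ u i) →
      (∑ i, (l i - (B ∩ Sg i).card) ≤ k - B.card) → k - B.card = n →
      ∃ C : Finset α, B ⊆ C ∧ C ⊆ S ∧ C.card = k ∧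
        ∀ i, l i ≤ (C ∩ Sg i).card ∧ (C ∩ Sg i).card ≤ u i by
    exact H (k - B.card) B hBS hBk hBu hdef rfl
  intro n
  induction n with
  | zero =>
    intro B hBS hBk hBu hdef hn
    have hk : B.card = k := le_antisymm hBk (Nat.sub_eq_zero_iff_le.mp hn)
    refine ⟨B, subset_rfl, hBS, hk, fun i => ⟨?_, hBu i⟩⟩
    rw [hn] at hdef
    have := Finset.sum_eq_zero_iff.mp (Nat.le_zero.mp hdef) i (Finset.mem_univ i)
    omega
  | succ n ih =>
    intro B hBS hBk hBu hdef hn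
    have hBlt : B.card < k := by omega
    -- find a group to add to
    have hfind : ∃ i : Fin m, (B ∩ Sg i).card < u i ∧
        (∑ j, (l j - ((B ∩ Sg j).card + if j = i then 1 else 0)) ≤ k - (B.card + 1)) := by
      by_cases hA : ∃ i, (B ∩ Sg i).card < l i
      · obtain ⟨i, hi⟩ := hA
        refine ⟨i, lt_of_lt_of_le hi (hlu i), ?_⟩
        have heq : ∑ j ∈ Finset.univ.erase i,
            (l j - ((B ∩ Sg j).card + if j = i then 1 else 0)) =
            ∑ j ∈ Finset.univ.erase i, (l j - (B ∩ Sg j).card) := by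
          refine Finset.sum_congr rfl fun j hj => ?_
          rw [if_neg (Finset.mem_erase.mp hj).1, Nat.add_zero]
        have hgoal : ∑ j, (l j - ((B ∩ Sg j).card + if j = i then 1 else 0))
            = (l i - ((B ∩ Sg i).card + 1))
              + ∑ j ∈ Finset.univ.erase i, (l j - (B ∩ Sg j).card) := by
          rw [← Finset.add_sum_erase _ _ (Finset.mem_univ i), if_pos rfl, heq]
        have hdef2 : ∑ j, (l j - (B ∩ Sg j).card)
            = (l i - (B ∩ Sg i).card)
              + ∑ j ∈ Finset.univ.erase i, (l j - (B ∩ Sg j).card) :=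
          (Finset.add_sum_erase _ _ (Finset.mem_univ i)).symm
        rw [hgoal]; rw [hdef2] at hdef
        omega
      · push_neg at hA
        have hz : ∀ j, l j - (B ∩ Sg j).card = 0 := fun j => Nat.sub_eq_zero_of_le (hA j)
        have : B.card < ∑ j, u j := lt_of_lt_of_le hBlt hku
        rw [← hsum B hBS] at this
        obtain ⟨i, -, hi⟩ := Finset.exists_lt_of_sum_lt this
        refine ⟨i, hi, ?_⟩
        have : ∀ j, l j - ((B ∩ Sg j).card + if j = i then 1 else 0) = 0 := by
          intro j; have := hz j; omega
        simp only [this, Finset.sum_const_zero]; omega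
    obtain ⟨i, hiu, hidef⟩ := hfind
    -- find an element of Sg i not in B
    have hcard : (B ∩ Sg i).card < (Sg i).card := lt_of_lt_of_le hiu (hus i)
    obtain ⟨x, hxSg, hxB⟩ : ∃ x ∈ Sg i, x ∉ B := by
      by_contra h
      push_neg at h
      have : Sg i ⊆ B ∩ Sg i := fun y hy => Finset.mem_inter.mpr ⟨h y hy, hy⟩
      exact absurd (Finset.card_le_card this) (not_le.mpr hcard)
    have hxS : x ∈ S := by
      rw [hcover]; exact Finset.mem_biUnion.mpr ⟨i, Finset.mem_univ i, hxSg⟩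
    set B' := insert x B with hB'
    have hB'card : B'.card = B.card + 1 := Finset.card_insert_of_notMem hxB
    have hinter : ∀ j, (B' ∩ Sg j).card = (B ∩ Sg j).card + if j = i then 1 else 0 := by
      intro j
      by_cases hji : j = i
      · subst hji
        rw [if_pos rfl, hB', Finset.insert_inter_of_mem hxSg,
          Finset.card_insert_of_notMem (fun h => hxB (Finset.mem_inter.mp h).1)]
      · rw [if_neg hji, Nat.add_zero, hB', Finset.insert_inter_of_notMem
          (fun h => (Finset.disjoint_left.mp (hdisj j i hji)) h hxSg)]
    have hres := ih B' (Finset.insert_subset hxS hBS) (by omega) (fun j => by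
        rw [hinter j]; by_cases hji : j = i
        · subst hji; simpa using hiu
        · simp [hji, hBu j])
      (by simp only [hinter]; rw [hB'card]; exact hidef)
      (by omega)
    obtain ⟨C, hBC, hCS, hCard, hCfair⟩ := hres
    exact ⟨C, subset_trans (Finset.subset_insert x B) hBC, hCS, hCard, hCfair⟩
end

section
/- Let (S, d) be a finite metric space with optimal range-based fair k-center cost r*. Let (a_1, ..., a_k) be the Gonzalez sequence on S with gaps d_i = min_{j<i} d(a_i, a_j). If d_i > 2r*, then there exists an injective map g : {a_1, ..., a_i} → S with d(g(a_j), a_j) < d_i/2 for all j ≤ i, such that g({a_1,...,a_i}) satisfies the fair-shift requirements: |S_f ∩ g(A)| ≤ u_f for every group f and ∑_f max(0, l_f − |S_f ∩ g(A)|) ≤ k − i. -/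
/-- if the i-th Gonzalez gap exceeds twice the optimal range-based fair k-center
cost, the prefix of Gonzalez centers admits a fair shift within distance d_i / 2. -/
theorem gonzalez_prefix_fair_shift {α : Type*} [MetricSpace α] [DecidableEq α]
    (S : Finset α) (m k : ℕ) (Sg : Fin m → Finset α)
    (hdisj : ∀ i j : Fin m, i ≠ j → Disjoint (Sg i) (Sg j))
    (hcover : S = Finset.univ.biUnion Sg)
    (l u : Fin m → ℕ) (hlu : ∀ f, l f ≤ u f) (hus : ∀ f, u f ≤ (Sg f).card)
    (hlk : ∑ f, l f ≤ k) (hku : k ≤ ∑ f, u f)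
    (rstar : ℝ)
    (hopt : ∃ C : Finset α, C ⊆ S ∧ C.card = k ∧
      (∀ f, l f ≤ (C ∩ Sg f).card ∧ (C ∩ Sg f).card ≤ u f) ∧
      ∀ s ∈ S, ∃ c ∈ C, dist s c ≤ rstar)
    (a : Fin k → α) (haS : ∀ i, a i ∈ S)
    (hmax : ∀ i : Fin k, 0 < i.val → ∀ s ∈ S,
      (⨅ j : {j : Fin k // j.val < i.val}, dist s (a j.val)) ≤
        ⨅ j : {j : Fin k // j.val < i.val}, dist (a i) (a j.val))
    (d : Fin k → ℝ)
    (hd : ∀ i : Fin k, 0 < i.val →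
      d i = ⨅ j : {j : Fin k // j.val < i.val}, dist (a i) (a j.val))
    (i : Fin k) (hi : 0 < i.val) (hdi : 2 * rstar < d i) :
    ∃ g : α → α,
      Set.InjOn g {x | ∃ j : Fin k, j ≤ i ∧ a j = x} ∧
      (∀ j : Fin k, j ≤ i → g (a j) ∈ S ∧ dist (g (a j)) (a j) < d i / 2) ∧
      (∀ f : Fin m,
        (Sg f ∩ (Finset.univ.filter (fun j : Fin k => j ≤ i)).image (fun j => g (a j))).card
          ≤ u f) ∧
      ∑ f, (l f -
          (Sg f ∩ (Finset.univ.filter (fun j : Fin k => j ≤ i)).image (fun j => g (a j))).card)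
        ≤ k - (i.val + 1) := by
  classical
  obtain ⟨C, hCS, hCk, hCf, hCcov⟩ := hopt
  -- rstar is nonnegative
  have hr0 : 0 ≤ rstar := by
    obtain ⟨c, _, hc⟩ := hCcov (a i) (haS i)
    exact le_trans dist_nonneg hc
  have hdipos : 0 < d i := by linarith
  -- choice function
  set g : α → α := fun x => if h : ∃ c ∈ C, dist x c ≤ rstar then h.choose else x with hg
  have hgC : ∀ x ∈ S, g x ∈ C ∧ dist x (g x) ≤ rstar := by
    intro x hx
    have h : ∃ c ∈ C, dist x c ≤ rstar := hCcov x hx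
    simp only [hg, dif_pos h]
    obtain ⟨h1, h2⟩ := h.choose_spec
    exact ⟨h1, h2⟩
  have hbdd : ∀ (s : α) (t : Fin k),
      BddBelow (Set.range fun j : {j : Fin k // j.val < t.val} => dist s (a j.val)) := by
    intro s t; exact ⟨0, by rintro _ ⟨j, rfl⟩; exact dist_nonneg⟩
  -- key separation
  have key : ∀ j j' : Fin k, j' < j → j ≤ i → d i ≤ dist (a j) (a j') := by
    intro j j' hj' hji
    have hj0 : 0 < j.val := lt_of_le_of_lt (Nat.zero_le _) hj'
    have : Nonempty {j'' : Fin k // j''.val < j.val} :=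
      ⟨⟨⟨0, lt_of_le_of_lt (Nat.zero_le _) j.2⟩, hj0⟩⟩
    have h1 : d i ≤ ⨅ j'' : {j'' : Fin k // j''.val < j.val}, dist (a i) (a j''.val) := by
      apply le_ciInf
      intro j''
      rw [hd i hi]
      exact ciInf_le (hbdd _ i) ⟨j''.1, lt_of_lt_of_le j''.2 hji⟩
    have h2 := hmax j hj0 (a i) (haS i)
    have h3 : (⨅ j'' : {j'' : Fin k // j''.val < j.val}, dist (a j) (a j''.val)) ≤
        dist (a j) (a j') := ciInf_le (hbdd _ j) ⟨j', hj'⟩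
    linarith
  have keyNe : ∀ j j' : Fin k, j ≠ j' → j ≤ i → j' ≤ i → d i ≤ dist (a j) (a j') := by
    intro j j' hne hj hj'
    rcases lt_or_gt_of_ne hne with h | h
    · rw [dist_comm]; exact key j' j h hj'
    · exact key j j' h hj
  have haInj : ∀ j j' : Fin k, j ≤ i → j' ≤ i → a j = a j' → j = j' := by
    intro j j' hj hj' heq
    by_contra hne
    have := keyNe j j' hne hj hj'
    rw [heq, dist_self] at this
    linarith
  refine ⟨g, ?_, ?_, ?_, ?_⟩
  · -- InjOn
    rintro x ⟨j, hj, rfl⟩ y ⟨j', hj', rfl⟩ hxy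
    by_contra hne
    have hjne : j ≠ j' := fun h => hne (congrArg a h)
    have hD := keyNe j j' hjne hj hj'
    have h1 := (hgC (a j) (haS j)).2
    have h2 := (hgC (a j') (haS j')).2
    have htri := dist_triangle (a j) (g (a j')) (a j')
    have h1' : dist (a j) (g (a j')) ≤ rstar := by rw [← hxy]; exact h1
    rw [dist_comm (g (a j')) (a j')] at htri
    linarith
  · intro j hj
    refine ⟨hCS (hgC (a j) (haS j)).1, ?_⟩
    have := (hgC (a j) (haS j)).2
    rw [dist_comm]
    linarith
  all_goals {
    have hA : ∀ f, (Sg f ∩ (Finset.univ.filter (fun j : Fin k => j ≤ i)).image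
        (fun j => g (a j))) ⊆ Sg f ∩ C := by
      intro f x hx
      rw [Finset.mem_inter] at hx ⊢
      refine ⟨hx.1, ?_⟩
      obtain ⟨j, hj, rfl⟩ := Finset.mem_image.mp hx.2
      exact (hgC (a j) (haS j)).1
    first
    | -- upper bounds
      (intro f
       calc _ ≤ (Sg f ∩ C).card := Finset.card_le_card (hA f)
         _ = (C ∩ Sg f).card := by rw [Finset.inter_comm]
         _ ≤ u f := (hCf f).2)
    | -- final sum
      (set T := Finset.univ.filter (fun j : Fin k => j ≤ i) with hT
       set A := T.image (fun j => g (a j)) with hAdef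
       have hTcard : T.card = i.val + 1 := by
         have : T = Finset.Iic i := by
           ext j; simp [hT]
         rw [this, Fin.card_Iic]
       have hAcard : A.card = i.val + 1 := by
         rw [hAdef, Finset.card_image_of_injOn, hTcard]
         intro j hj j' hj' heq
         simp only [hT, Finset.coe_filter, Finset.mem_univ, true_and,
           Set.mem_setOf_eq] at hj hj'
         simp only at heq
         have h1 := (hgC (a j) (haS j)).2
         have h2 := (hgC (a j') (haS j')).2
         by_contra hne
         have hD := keyNe j j' hne hj hj'
         have htri := dist_triangle (a j) (g (a j')) (a j')
         have h1' : dist (a j) (g (a j')) ≤ rstar := by rw [← heq]; exact h1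
         rw [dist_comm (g (a j')) (a j')] at htri
         linarith
       have hAC : A ⊆ C := by
         intro x hx
         obtain ⟨j, hj, rfl⟩ := Finset.mem_image.mp hx
         exact (hgC (a j) (haS j)).1
       have hpart : ∀ X : Finset α, X ⊆ S → ∑ f, (Sg f ∩ X).card = X.card := by
         intro X hX
         rw [← Finset.card_biUnion]
         · congr 1
           ext x
           simp only [Finset.mem_biUnion, Finset.mem_inter, Finset.mem_univ, true_and]
           constructor
           · rintro ⟨f, _, hx⟩; exact hx
           · intro hx
             have := hX hx
             rw [hcover, Finset.mem_biUnion] at this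
             obtain ⟨f, _, hf⟩ := this
             exact ⟨f, hf, hx⟩
         · intro f _ f' _ hff
           exact Finset.disjoint_of_subset_left Finset.inter_subset_left
             (Finset.disjoint_of_subset_right Finset.inter_subset_left (hdisj f f' hff))
       have hsumC : ∑ f, (Sg f ∩ C).card = k := by rw [hpart C hCS, hCk]
       have hsumA : ∑ f, (Sg f ∩ A).card = i.val + 1 := by
         rw [hpart A (hAC.trans hCS), hAcard]
       have hle : ∀ f, (Sg f ∩ A).card ≤ (Sg f ∩ C).card := fun f =>
         Finset.card_le_card (Finset.inter_subset_inter (Finset.Subset.refl _) hAC)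
       have hstep : ∀ f, l f - (Sg f ∩ A).card ≤ (Sg f ∩ C).card - (Sg f ∩ A).card := by
         intro f
         apply Nat.sub_le_sub_right
         rw [Finset.inter_comm]
         exact (hCf f).1
       calc ∑ f, (l f - (Sg f ∩ A).card)
           ≤ ∑ f, ((Sg f ∩ C).card - (Sg f ∩ A).card) := Finset.sum_le_sum fun f _ => hstep f
         _ = ∑ f, (Sg f ∩ C).card - ∑ f, (Sg f ∩ A).card := by
             have h := Finset.sum_add_distrib (s := Finset.univ)
               (f := fun f => (Sg f ∩ C).card - (Sg f ∩ A).card) (g := fun f => (Sg f ∩ A).card)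
             have h2 : ∑ f, ((Sg f ∩ C).card - (Sg f ∩ A).card + (Sg f ∩ A).card) =
                 ∑ f, (Sg f ∩ C).card := by
               apply Finset.sum_congr rfl
               intro f _
               exact Nat.sub_add_cancel (hle f)
             omega
         _ = k - (i.val + 1) := by rw [hsumC, hsumA])
  }
end

section
/- Let C be a finite subset of a metric space processed by the Gonzalez algorithm yielding gaps d_2 ≥ d_3 ≥ ... Suppose a new instance with radius guess Δ ≥ τ_r = d_{k+1}/2 processes the points of C in the Gonzalez order, adding a point as a new pivot only if it is at distance > 2Δ from all current pivots. Then at most k points of C become new pivots. -/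
open Classical in
/-- The streaming re-insertion process: point `a n` becomes a new pivot iff it is at distance
greater than `2Δ` from all current pivots. -/
noncomputable def pivotProcess {α : Type*} [MetricSpace α] (a : ℕ → α) (Δ : ℝ) : ℕ → Finset α
  | 0 => ∅
  | n + 1 =>
    if ∀ c ∈ pivotProcess a Δ n, 2 * Δ < dist c (a n) then
      insert (a n) (pivotProcess a Δ n)
    else pivotProcess a Δ n

/-- processing the points of C in Gonzalez order with radius guess Δ satisfying
d_{k+1} ≤ 2Δ creates at most k new pivots. -/
theorem pivot_process_at_most_k {α : Type*} [MetricSpace α] (C : Finset α) (k n : ℕ)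
    (hk : 0 < k) (hkn : k < n) (hn : n = C.card)
    (a : ℕ → α) (haC : ∀ j, j < n → a j ∈ C)
    (hsurj : ∀ x ∈ C, ∃ j, j < n ∧ a j = x)
    (hinj : ∀ j₁, j₁ < n → ∀ j₂, j₂ < n → a j₁ = a j₂ → j₁ = j₂)
    (hmax : ∀ i, i < n → 0 < i → ∀ s ∈ C,
      (⨅ j : {j : ℕ // j < i}, dist s (a j.val)) ≤
        ⨅ j : {j : ℕ // j < i}, dist (a i) (a j.val))
    (Δ : ℝ)
    (hgap : (⨅ j : {j : ℕ // j < k}, dist (a k) (a j.val)) ≤ 2 * Δ) :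
    ∀ t ≤ n, (pivotProcess a Δ t).card ≤ k := by
  classical
  -- From a bound on the infimum, extract a witness index.
  have key : ∀ m : ℕ, ∀ x : α, 0 < m →
      (⨅ j : {j : ℕ // j < m}, dist x (a j.val)) ≤ 2 * Δ →
      ∃ j, j < m ∧ dist x (a j) ≤ 2 * Δ := by
    intro m x hm hle
    haveI : Nonempty {j : ℕ // j < m} := ⟨⟨0, hm⟩⟩
    obtain ⟨j0, hj0⟩ := Finite.exists_min (fun j : {j : ℕ // j < m} => dist x (a j.val))
    exact ⟨j0.1, j0.2, (le_ciInf hj0).trans hle⟩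
  have Q : ∀ t ≤ n, ∃ m, pivotProcess a Δ t = (Finset.range m).image a ∧
      m ≤ t ∧ m ≤ k ∧
      (m < t → 0 < m ∧ (⨅ j : {j : ℕ // j < m}, dist (a m) (a j.val)) ≤ 2 * Δ) := by
    intro t
    induction t with
    | zero =>
      intro _
      exact ⟨0, by simp [pivotProcess], le_refl 0, Nat.zero_le k, by omega⟩
    | succ t ih =>
      intro ht
      obtain ⟨m, hset, hmt, hmk, hstall⟩ := ih (by omega)
      have htn : t < n := by omega
      by_cases hm : m < t
      · -- stalled: a t is not added
        obtain ⟨hm0, hinf⟩ := hstall hm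
        have hmn : m < n := by omega
        have h1 := hmax m hmn hm0 (a t) (haC t htn)
        obtain ⟨j, hj, hjd⟩ := key m (a t) hm0 (h1.trans hinf)
        have hnot : ¬ ∀ c ∈ pivotProcess a Δ t, 2 * Δ < dist c (a t) := by
          push_neg
          refine ⟨a j, ?_, ?_⟩
          · rw [hset]; exact Finset.mem_image.2 ⟨j, Finset.mem_range.2 hj, rfl⟩
          · rw [dist_comm]; exact hjd
        refine ⟨m, ?_, by omega, hmk, fun _ => ⟨hm0, hinf⟩⟩
        rw [pivotProcess, if_neg hnot]; exact hset
      · have hmt' : t = m := by omega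
        subst hmt'
        by_cases hcond : ∀ c ∈ pivotProcess a Δ t, 2 * Δ < dist c (a t)
        · -- a t is added; show t < k
          have htk : t < k := by
            by_contra hge
            push_neg at hge
            have h1 := (hmax k hkn hk (a t) (haC t htn)).trans hgap
            obtain ⟨j, hj, hjd⟩ := key k (a t) hk h1
            have hmem : a j ∈ pivotProcess a Δ t := by
              rw [hset]
              exact Finset.mem_image.2 ⟨j, Finset.mem_range.2 (by omega), rfl⟩
            have := hcond _ hmem
            rw [dist_comm] at this
            linarith
          refine ⟨t + 1, ?_, le_refl _, htk, by omega⟩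
          rw [pivotProcess, if_pos hcond, hset, Finset.range_add_one, Finset.image_insert]
        · -- a t is not added; record stall data
          refine ⟨t, ?_, by omega, hmk, fun _ => ?_⟩
          · rw [pivotProcess, if_neg hcond]; exact hset
          · push_neg at hcond
            obtain ⟨c, hc, hcd⟩ := hcond
            rw [hset] at hc
            obtain ⟨j, hjr, rfl⟩ := Finset.mem_image.1 hc
            have hj := Finset.mem_range.1 hjr
            refine ⟨by omega, ?_⟩
            have hb : BddBelow (Set.range fun j' : {j' : ℕ // j' < t} => dist (a t) (a j'.val)) := by
              refine ⟨0, ?_⟩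
              rintro x ⟨j', rfl⟩
              exact dist_nonneg
            calc (⨅ j' : {j' : ℕ // j' < t}, dist (a t) (a j'.val)) ≤ dist (a t) (a j) :=
                  ciInf_le hb ⟨j, hj⟩
              _ ≤ 2 * Δ := by rw [dist_comm] at hcd; exact hcd
  intro t ht
  obtain ⟨m, hset, _, hmk, _⟩ := Q t ht
  rw [hset]
  calc ((Finset.range m).image a).card ≤ (Finset.range m).card := Finset.card_image_le
    _ = m := Finset.card_range m
    _ ≤ k := hmk
end

section
/- Let S be partitioned into groups S_1, ..., S_m, let OPT be an optimal fair solution of cost r*, and let C_o ⊆ S be a set such that there is a map f : S → C_o with d(x, f(x)) ≤ (2+ε)Δ for all x, where Δ ≥ r*. Suppose for each pivot c ∈ C_o and each group i, the stored set I(c) contains at least min(|f^{-1}(c) ∩ S_i|, 1) points of group S_i, all within distance (2+ε)Δ of c. Then there exists a map g : OPT → ∪_c I(c) such that for each o* ∈ OPT, g(o*) ∈ I(f(o*)), g(o*) belongs to the same group as o*, and d(o*, g(o*)) ≤ (4+2ε)Δ. -/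
/-- existence of the replacement map g : OPT → ∪_c I(c) with same-group
replacements at distance at most (4+2ε)Δ. -/
theorem replacement_map_exists {α : Type*} [MetricSpace α] (m : ℕ) (group : α → Fin m)
    (S OPTset Co : Finset α) (f : α → α) (I : α → Finset α) (ε Δ rstar : ℝ)
    (hε : 0 ≤ ε) (hΔr : rstar ≤ Δ) (hOS : OPTset ⊆ S)
    (hf : ∀ x ∈ S, f x ∈ Co ∧ dist x (f x) ≤ (2 + ε) * Δ)
    (hIdist : ∀ c ∈ Co, ∀ y ∈ I c, dist c y ≤ (2 + ε) * Δ)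
    (hIrep : ∀ c ∈ Co, ∀ i : Fin m,
      (∃ x ∈ S, f x = c ∧ group x = i) → ∃ y ∈ I c, group y = i) :
    ∃ g : α → α, ∀ o ∈ OPTset, g o ∈ I (f o) ∧ group (g o) = group o ∧
      dist o (g o) ≤ (4 + 2 * ε) * Δ := by
  classical
  have key : ∀ o ∈ OPTset, ∃ y ∈ I (f o), group y = group o := by
    intro o ho
    have hoS := hOS ho
    have hfo := hf o hoS
    exact hIrep (f o) hfo.1 (group o) ⟨o, hoS, rfl, rfl⟩
  choose! g hg1 hg2 using key
  refine ⟨g, fun o ho => ⟨hg1 o ho, hg2 o ho, ?_⟩⟩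
  have hoS := hOS ho
  have hfo := hf o hoS
  have h2 := hIdist (f o) hfo.1 (g o) (hg1 o ho)
  calc dist o (g o) ≤ dist o (f o) + dist (f o) (g o) := dist_triangle _ _ _
    _ ≤ (2 + ε) * Δ + (2 + ε) * Δ := add_le_add hfo.2 h2
    _ = (4 + 2 * ε) * Δ := by ring
end
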